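/- Let H be a quasi-transitive d-regular locally finite, connected, infinite simple graph containing at least one cycle, and let T_d be the d-regular tree (the infinite tree in which every vertex has degree d). Then there exists a strong covering map π : V(T_d) → V(H) with uniformly non-trivial fibres. -/

import Mathlib

open MeasureTheory
open scoped Classical ENNReal

/-- The Bernoulli measure on `Bool` with parameter `p` (`true` = open, with prob. `p`). -/
noncomputable def bernoulliMeasure (p : ℝ) : Measure Bool :=
  ENNReal.ofReal p • Measure.dirac true + ENNReal.ofReal (1 - p) • Measure.dirac false

/-- The Bernoulli(`p`) product measure on configurations `ι → Bool`, realized as the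
Carathéodory-extension outer measure of the product premeasure; on measurable sets it
is the usual i.i.d. Bernoulli product probability measure. -/
noncomputable def bernoulliProduct (ι : Type*) (p : ℝ) : OuterMeasure (ι → Bool) :=
  OuterMeasure.ofFunction
    (fun A : Set (ι → Bool) =>
      if A = ∅ then 0 else ∏' i : ι, bernoulliMeasure p (Function.eval i '' A))
    (by simp)

/-- The subgraph of open edges of the configuration `ω` (an edge `e` is open iff `ω e = true`). -/
def openSubgraph {V : Type*} (G : SimpleGraph V) (ω : G.edgeSet → Bool) : SimpleGraph V :=
  G.deleteEdges {e : Sym2 V | ∃ h : e ∈ G.edgeSet, ω ⟨e, h⟩ = false}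

/-- The event that the open subgraph has an infinite connected component. -/
def HasInfiniteCluster {V : Type*} (G : SimpleGraph V) (ω : G.edgeSet → Bool) : Prop :=
  ∃ v : V, {w : V | (openSubgraph G ω).Reachable v w}.Infinite

/-- The critical percolation threshold
`p_c(G) = sup {p ∈ [0,1] | ℙ_p(∃ an infinite connected component) = 0}`. -/
noncomputable def pc {V : Type*} (G : SimpleGraph V) : ℝ :=
  sSup {p : ℝ | p ∈ Set.Icc (0 : ℝ) 1 ∧
    bernoulliProduct G.edgeSet p {ω | HasInfiniteCluster G ω} = 0}

/-- A graph is quasi-transitive if its automorphism group acts on the vertices with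
finitely many orbits, i.e. there is a finite set meeting every orbit. -/
def QuasiTransitive {V : Type*} (G : SimpleGraph V) : Prop :=
  ∃ S : Finset V, ∀ v : V, ∃ φ : G ≃g G, φ v ∈ S

/-- `π` is a strong covering map from `G` to `H`: it is 1-Lipschitz for the graph
distances and has the strong lifting property (every neighbour of `π x` has a unique
lift to a neighbour of `x`). -/
def IsStrongCoveringMap {VG VH : Type*} (G : SimpleGraph VG) (H : SimpleGraph VH)
    (π : VG → VH) : Prop :=
  (∀ x y : VG, H.dist (π x) (π y) ≤ G.dist x y) ∧
  ∀ (x : VG) (u : VH), H.Adj (π x) u → ∃! y : VG, G.Adj x y ∧ π y = u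

/-- `π` has uniformly non-trivial fibres: there is `R` such that every `x` admits a
`y ≠ x` in the same fibre with `0 < d_G(x, y) ≤ R`. -/
def HasUniformlyNontrivialFibres {VG VH : Type*} (G : SimpleGraph VG) (π : VG → VH) : Prop :=
  ∃ R : ℕ, ∀ x : VG, ∃ y : VG, π x = π y ∧ 0 < G.dist x y ∧ G.dist x y ≤ R



open SimpleGraph

namespace CoverAux


variable {W V : Type*}

lemma exists_bijOn_anchor {A : Set W} {B : Set V} {a : W} {b : V}
    (hA : A.Finite) (hB : B.Finite) (hcard : A.ncard = B.ncard)
    (ha : a ∈ A) (hb : b ∈ B) :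
    ∃ f : W → V, Set.BijOn f A B ∧ f a = b := by
  classical
  have hA' : (A \ {a}).Finite := hA.diff
  have hB' : (B \ {b}).Finite := hB.diff
  haveI := hA'.to_subtype
  haveI := hB'.to_subtype
  have hcard' : Nat.card (A \ {a} : Set W) = Nat.card (B \ {b} : Set V) := by
    rw [Nat.card_coe_set_eq, Nat.card_coe_set_eq,
      Set.ncard_diff_singleton_of_mem ha, Set.ncard_diff_singleton_of_mem hb, hcard]
  have e : (A \ {a} : Set W) ≃ (B \ {b} : Set V) :=
    (Finite.equivFinOfCardEq hcard').trans (Finite.equivFinOfCardEq rfl).symm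
  refine ⟨fun x => if hx : x ∈ A \ {a} then (e ⟨x, hx⟩ : V) else b, ⟨?_, ?_, ?_⟩, ?_⟩
  · intro x hx
    by_cases hx' : x ∈ A \ {a}
    · simp only [hx', dif_pos]
      exact ((e ⟨x, hx'⟩).2).1
    · simp only [hx', dif_neg, not_false_iff]
      exact hb
  · intro x hx y hy hxy
    by_cases hx' : x ∈ A \ {a} <;> by_cases hy' : y ∈ A \ {a}
    · simp only [hx', hy', dif_pos] at hxy
      have := Subtype.coe_injective hxy
      exact congrArg Subtype.val (e.injective this)
    · exfalso
      simp only [hx', hy', dif_pos, dif_neg, not_false_iff] at hxy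
      exact ((e ⟨x, hx'⟩).2).2 (by simpa using hxy)
    · exfalso
      simp only [hx', hy', dif_pos, dif_neg, not_false_iff] at hxy
      exact ((e ⟨y, hy'⟩).2).2 (by simpa using hxy.symm)
    · have hxa : x = a := by
        by_contra h
        exact hx' ⟨hx, h⟩
      have hya : y = a := by
        by_contra h
        exact hy' ⟨hy, h⟩
      rw [hxa, hya]
  · intro y hy
    by_cases hy' : y = b
    · refine ⟨a, ha, ?_⟩
      simp [hy']
    · have hyB : y ∈ B \ {b} := ⟨hy, hy'⟩
      refine ⟨(e.symm ⟨y, hyB⟩ : W), ((e.symm ⟨y, hyB⟩).2).1, ?_⟩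
      have hx' : (e.symm ⟨y, hyB⟩ : W) ∈ A \ {a} := (e.symm ⟨y, hyB⟩).2
      simp only [hx', dif_pos]
      have : e ⟨(e.symm ⟨y, hyB⟩ : W), hx'⟩ = ⟨y, hyB⟩ := by
        rw [show (⟨(e.symm ⟨y, hyB⟩ : W), hx'⟩ : (A \ {a} : Set W)) = e.symm ⟨y, hyB⟩ from
          Subtype.ext rfl]
        exact e.apply_symm_apply _
      rw [this]
  · simp

open scoped Classical in
noncomputable def pickBij (A : Set W) (B : Set V) (a : W) (b : V) : W → V :=
  if h : A.Finite ∧ B.Finite ∧ A.ncard = B.ncard ∧ a ∈ A ∧ b ∈ B then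
    (exists_bijOn_anchor h.1 h.2.1 h.2.2.1 h.2.2.2.1 h.2.2.2.2).choose
  else fun _ => b

lemma pickBij_spec {A : Set W} {B : Set V} {a : W} {b : V}
    (hA : A.Finite) (hB : B.Finite) (hcard : A.ncard = B.ncard)
    (ha : a ∈ A) (hb : b ∈ B) :
    Set.BijOn (pickBij A B a b) A B ∧ pickBij A B a b a = b := by
  classical
  rw [pickBij, dif_pos ⟨hA, hB, hcard, ha, hb⟩]
  exact (exists_bijOn_anchor hA hB hcard ha hb).choose_spec



variable {W : Type*} {T : SimpleGraph W}

noncomputable def tpath (hc : T.Connected) (r w : W) : T.Walk r w :=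
  (hc.exists_path_of_dist r w).choose

lemma tpath_isPath (hc : T.Connected) (r w : W) : (tpath hc r w).IsPath :=
  (hc.exists_path_of_dist r w).choose_spec.1

lemma tpath_length (hc : T.Connected) (r w : W) : (tpath hc r w).length = T.dist r w :=
  (hc.exists_path_of_dist r w).choose_spec.2

noncomputable def tparent (hc : T.Connected) (r w : W) : W :=
  (tpath hc r w).getVert (T.dist r w - 1)

lemma tparent_self (hc : T.Connected) (r : W) : tparent hc r r = r := by
  unfold tparent
  simp [SimpleGraph.dist_self]

lemma dist_ne_zero_of_ne (hc : T.Connected) {r w : W} (hw : w ≠ r) : T.dist r w ≠ 0 :=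
  Nat.pos_iff_ne_zero.mp (hc.pos_dist_of_ne (Ne.symm hw))

lemma tparent_adj (hc : T.Connected) {r w : W} (hw : w ≠ r) : T.Adj (tparent hc r w) w := by
  have hd : T.dist r w ≠ 0 := dist_ne_zero_of_ne hc hw
  have hl := tpath_length hc r w
  have h1 : T.dist r w - 1 < (tpath hc r w).length := by omega
  have h2 := Walk.adj_getVert_succ (tpath hc r w) h1
  rw [show T.dist r w - 1 + 1 = T.dist r w by omega] at h2
  have h3 : (tpath hc r w).getVert (T.dist r w) = w := by
    rw [← hl]; exact Walk.getVert_length _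
  rw [h3] at h2
  exact h2

lemma dist_getVert_le (hc : T.Connected) {u v : W} (p : T.Walk u v) (i : ℕ) :
    T.dist u (p.getVert i) ≤ i := by
  induction p generalizing i with
  | nil => simp [SimpleGraph.dist_self, Walk.getVert]
  | @cons a b c h q ih =>
    cases i with
    | zero => simp [SimpleGraph.dist_self, Walk.getVert]
    | succ j =>
      rw [Walk.getVert_cons_succ]
      calc T.dist a (q.getVert j) ≤ T.dist a b + T.dist b (q.getVert j) := hc.dist_triangle
        _ ≤ 1 + j := by
            have h1 : T.dist a b = 1 := SimpleGraph.dist_eq_one_iff_adj.mpr h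
            have := ih j
            omega
        _ = j + 1 := by omega

lemma tparent_dist (hc : T.Connected) {r w : W} (hw : w ≠ r) :
    T.dist r (tparent hc r w) = T.dist r w - 1 := by
  have hd : T.dist r w ≠ 0 := dist_ne_zero_of_ne hc hw
  have hle : T.dist r (tparent hc r w) ≤ T.dist r w - 1 := dist_getVert_le hc _ _
  have hadj : T.dist (tparent hc r w) w = 1 :=
    SimpleGraph.dist_eq_one_iff_adj.mpr (tparent_adj hc hw)
  have htri : T.dist r w ≤ T.dist r (tparent hc r w) + T.dist (tparent hc r w) w :=
    hc.dist_triangle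
  omega

lemma tparent_of_adj (hT : T.IsTree) {r w u : W} (hadj : T.Adj w u)
    (hne : u ≠ tparent hT.isConnected r w) :
    T.dist r u = T.dist r w + 1 ∧ tparent hT.isConnected r u = w := by
  classical
  have hc := hT.isConnected
  set P := tpath hT.isConnected r w with hPdef
  have hPl : P.length = T.dist r w := tpath_length _ r w
  have hPp : P.IsPath := tpath_isPath _ r w
  have hus : u ∉ P.support := by
    intro hu
    have hd : (P.dropUntil u hu).IsPath := hPp.dropUntil hu
    have he : (Walk.cons hadj.symm Walk.nil : T.Walk u w).IsPath := by
      simp [Walk.cons_isPath_iff, hadj.ne']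
    have heq : P.dropUntil u hu = Walk.cons hadj.symm Walk.nil :=
      (hT.existsUnique_path u w).unique hd he
    have hspec := P.take_spec hu
    apply hne
    have hlen : (P.takeUntil u hu).length + 1 = P.length := by
      conv_rhs => rw [← hspec]
      rw [Walk.length_append, heq]
      simp
    have hgv : P.getVert (T.dist r w - 1) = u := by
      conv_lhs => rw [← hspec]
      rw [Walk.getVert_append, if_neg (by omega)]
      rw [show T.dist r w - 1 - (P.takeUntil u hu).length = 0 by omega]
      exact Walk.getVert_zero _
    exact hgv.symm
  -- now the concatenated walk is the unique path from r to u
  set Q : T.Walk r u := P.append (Walk.cons hadj Walk.nil) with hQdef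
  have hQp : Q.IsPath := by
    rw [hQdef]
    have : (Walk.cons hadj Walk.nil : T.Walk w u) = (Walk.nil : T.Walk w w).concat hadj := rfl
    rw [show P.append (Walk.cons hadj Walk.nil) = P.concat hadj from
      (Walk.concat_eq_append P hadj).symm]
    rw [Walk.isPath_def, Walk.support_concat, List.nodup_append]
    refine ⟨hPp.support_nodup, List.nodup_singleton u, ?_⟩
    intro a ha b hb hab
    rw [List.mem_singleton] at hb
    subst hb
    exact hus (hab ▸ ha)
  have hQlen : Q.length = T.dist r w + 1 := by
    rw [hQdef, Walk.length_append, hPl]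
    simp
  have hQeq : tpath hT.isConnected r u = Q :=
    (hT.existsUnique_path r u).unique (tpath_isPath _ r u) hQp
  have hdist : T.dist r u = T.dist r w + 1 := by
    rw [← tpath_length hT.isConnected r u, hQeq, hQlen]
  refine ⟨hdist, ?_⟩
  unfold tparent
  rw [hQeq, hdist]
  rw [show T.dist r w + 1 - 1 = T.dist r w by omega]
  rw [hQdef, Walk.getVert_append, if_neg (by omega)]
  rw [show T.dist r w - P.length = 0 by omega]
  exact Walk.getVert_zero _

lemma eq_tparent_of_adj_of_dist_ne (hT : T.IsTree) {r w u : W} (hadj : T.Adj w u)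
    (hd : T.dist r u ≠ T.dist r w + 1) : u = tparent hT.isConnected r w := by
  by_contra h
  exact hd (tparent_of_adj hT hadj h).1

/-- In a tree, a walk whose vertices never repeat at distance two is a geodesic. -/
lemma tree_geodesic (hT : T.IsTree) {x y : W} (q : T.Walk x y)
    (hnb : ∀ i, i + 2 ≤ q.length → q.getVert i ≠ q.getVert (i + 2)) :
    ∀ i, i ≤ q.length → T.dist x (q.getVert i) = i := by
  intro i
  induction i using Nat.strong_induction_on with
  | _ i IH =>
    match i with
    | 0 => intro _; simp [SimpleGraph.dist_self]
    | 1 =>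
      intro h1
      have hadj : T.Adj x (q.getVert 1) := by
        have := q.adj_getVert_succ (by omega : 0 < q.length)
        rwa [Walk.getVert_zero] at this
      have hne : q.getVert 1 ≠ tparent hT.isConnected x x := by
        rw [tparent_self]
        exact hadj.ne'
      have := (tparent_of_adj hT hadj hne).1
      rw [this, SimpleGraph.dist_self]
    | (k + 2) =>
      intro hk2
      have hk : T.dist x (q.getVert k) = k := IH k (by omega) (by omega)
      have hk1 : T.dist x (q.getVert (k + 1)) = k + 1 := IH (k + 1) (by omega) (by omega)
      have hadj : T.Adj (q.getVert (k + 1)) (q.getVert (k + 2)) :=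
        q.adj_getVert_succ (by omega : k + 1 < q.length)
      have hadj' : T.Adj (q.getVert (k + 1)) (q.getVert k) :=
        (q.adj_getVert_succ (by omega : k < q.length)).symm
      have hpar : q.getVert k = tparent hT.isConnected x (q.getVert (k + 1)) :=
        eq_tparent_of_adj_of_dist_ne hT hadj' (by omega)
      have hne : q.getVert (k + 2) ≠ tparent hT.isConnected x (q.getVert (k + 1)) := by
        rw [← hpar]
        exact fun h => hnb k (by omega) h.symm
      have := (tparent_of_adj hT hadj hne).1
      omega



variable {W : Type*} {T : SimpleGraph W}

lemma support_eq_map_getVert {u v : W} (p : T.Walk u v) :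
    p.support = (List.range (p.length + 1)).map p.getVert := by
  induction p with
  | nil => simp [Walk.getVert]
  | @cons a b c h q ih =>
    rw [Walk.support_cons, ih, Walk.length_cons]
    conv_rhs => rw [List.range_succ_eq_map]
    rw [List.map_cons, List.map_map]
    rfl

lemma cycle_getVert_injOn {v : W} {c : T.Walk v v} (hc : c.IsCycle) :
    ∀ i ∈ List.range c.length, ∀ j ∈ List.range c.length,
      c.getVert (i + 1) = c.getVert (j + 1) → i = j := by
  have hnodup := hc.2
  rw [support_eq_map_getVert, List.range_succ_eq_map] at hnodup
  simp only [List.map_cons, List.tail_cons, List.map_map] at hnodup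
  have := (List.nodup_map_iff_inj_on List.nodup_range).mp hnodup
  intro i hi j hj hij
  exact this i hi j hj (by simpa [Function.comp] using hij)

lemma cycle_getVert_ne {v : W} {c : T.Walk v v} (hc : c.IsCycle) :
    ∀ i, i + 2 ≤ c.length → c.getVert i ≠ c.getVert (i + 2) := by
  have h3 := hc.three_le_length
  have hinj := cycle_getVert_injOn hc
  intro i h2
  match i with
  | 0 =>
    intro h
    have h0 : c.getVert 0 = c.getVert c.length := by
      rw [Walk.getVert_zero, Walk.getVert_length]
    rw [h0] at h
    have : c.length - 1 = 1 := by
      apply hinj _ (by rw [List.mem_range]; omega) _ (by rw [List.mem_range]; omega)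
      rw [show c.length - 1 + 1 = c.length by omega]
      exact h
    omega
  | (k + 1) =>
    intro h
    have : k = k + 2 := by
      apply hinj _ (by rw [List.mem_range]; omega) _ (by rw [List.mem_range]; omega)
      exact h
    omega




noncomputable def coverMap {V : Type*} (H : SimpleGraph V) (hc : T.Connected) (r : W)
    (v0 : V) (a₀ : W) (b₀ : V) (w : W) : V :=
  if _h0 : T.dist r w = 0 then v0
  else
    if _h1 : T.dist r (tparent hc r w) = 0 then
      pickBij (T.neighborSet r) (H.neighborSet v0) a₀ b₀ w
    else
      pickBij (T.neighborSet (tparent hc r w))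
        (H.neighborSet (coverMap H hc r v0 a₀ b₀ (tparent hc r w)))
        (tparent hc r (tparent hc r w))
        (coverMap H hc r v0 a₀ b₀ (tparent hc r (tparent hc r w))) w
termination_by T.dist r w
decreasing_by
  · have hw : w ≠ r := by
      intro h; subst h; simp [SimpleGraph.dist_self] at _h0
    have := tparent_dist hc hw
    omega
  · have hw : w ≠ r := by
      intro h; subst h; simp [SimpleGraph.dist_self] at _h0
    have h2 := tparent_dist hc hw
    have hp : tparent hc r w ≠ r := by
      intro h; rw [h] at _h1; simp [SimpleGraph.dist_self] at _h1
    have := tparent_dist hc hp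
    omega

variable {V : Type*} {H : SimpleGraph V} {hc : T.Connected} {r : W} {v0 : V} {a₀ : W} {b₀ : V}

lemma coverMap_root : coverMap H hc r v0 a₀ b₀ r = v0 := by
  rw [coverMap]
  simp [SimpleGraph.dist_self]

lemma coverMap_child1 {w : W} (h0 : w ≠ r) (h1 : tparent hc r w = r) :
    coverMap H hc r v0 a₀ b₀ w = pickBij (T.neighborSet r) (H.neighborSet v0) a₀ b₀ w := by
  rw [coverMap, dif_neg (dist_ne_zero_of_ne hc h0),
    dif_pos (by rw [h1]; exact SimpleGraph.dist_self)]

lemma coverMap_child2 {w : W} (h0 : w ≠ r) (h1 : tparent hc r w ≠ r) :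
    coverMap H hc r v0 a₀ b₀ w =
      pickBij (T.neighborSet (tparent hc r w))
        (H.neighborSet (coverMap H hc r v0 a₀ b₀ (tparent hc r w)))
        (tparent hc r (tparent hc r w))
        (coverMap H hc r v0 a₀ b₀ (tparent hc r (tparent hc r w))) w := by
  rw [coverMap, dif_neg (dist_ne_zero_of_ne hc h0), dif_neg (dist_ne_zero_of_ne hc h1)]




lemma coverMap_adj_parent {d : ℕ} (hT : T.IsTree)
    (hTlf : ∀ v : W, (T.neighborSet v).Finite) (hTreg : ∀ v : W, (T.neighborSet v).ncard = d)
    (hHlf : ∀ v : V, (H.neighborSet v).Finite) (hHreg : ∀ v : V, (H.neighborSet v).ncard = d)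
    (hc : T.Connected) (r : W) (v0 : V) {a₀ : W} {b₀ : V}
    (ha₀ : a₀ ∈ T.neighborSet r) (hb₀ : b₀ ∈ H.neighborSet v0) :
    ∀ w : W, w ≠ r →
      H.Adj (coverMap H hc r v0 a₀ b₀ (tparent hc r w)) (coverMap H hc r v0 a₀ b₀ w) := by
  set π := coverMap H hc r v0 a₀ b₀ with hπ
  have key : ∀ n : ℕ, ∀ w : W, T.dist r w = n → w ≠ r → H.Adj (π (tparent hc r w)) (π w) := by
    intro n
    induction n using Nat.strong_induction_on with
    | _ n IH =>
      intro w hn hne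
      by_cases hp : tparent hc r w = r
      · rw [hπ, coverMap_child1 hne hp, hp, coverMap_root]
        have hbij := (pickBij_spec (hTlf r) (hHlf v0)
          (by rw [hTreg, hHreg]) ha₀ hb₀).1
        have hwmem : w ∈ T.neighborSet r := by
          rw [SimpleGraph.mem_neighborSet]
          have := tparent_adj hc hne
          rwa [hp] at this
        exact hbij.mapsTo hwmem
      · have hdp : T.dist r (tparent hc r w) < n := by
          have h1 := tparent_dist hc hne
          have h2 := dist_ne_zero_of_ne hc hne
          omega
        have hIH := IH _ hdp (tparent hc r w) rfl hp
        have hbmem : π (tparent hc r (tparent hc r w)) ∈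
            H.neighborSet (π (tparent hc r w)) := by
          rw [SimpleGraph.mem_neighborSet]
          exact hIH.symm
        have hamem : tparent hc r (tparent hc r w) ∈ T.neighborSet (tparent hc r w) := by
          rw [SimpleGraph.mem_neighborSet]
          exact (tparent_adj hc hp).symm
        have hbij := (pickBij_spec (hTlf _) (hHlf _) (by rw [hTreg, hHreg]) hamem hbmem).1
        have hwmem : w ∈ T.neighborSet (tparent hc r w) := by
          rw [SimpleGraph.mem_neighborSet]
          exact tparent_adj hc hne
        have := hbij.mapsTo hwmem
        rw [SimpleGraph.mem_neighborSet] at this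
        rw [hπ, coverMap_child2 hne hp]
        exact this
  exact fun w hw => key (T.dist r w) w rfl hw

lemma coverMap_bijOn {d : ℕ} (hT : T.IsTree)
    (hTlf : ∀ v : W, (T.neighborSet v).Finite) (hTreg : ∀ v : W, (T.neighborSet v).ncard = d)
    (hHlf : ∀ v : V, (H.neighborSet v).Finite) (hHreg : ∀ v : V, (H.neighborSet v).ncard = d)
    (hc : T.Connected) (r : W) (v0 : V) {a₀ : W} {b₀ : V}
    (ha₀ : a₀ ∈ T.neighborSet r) (hb₀ : b₀ ∈ H.neighborSet v0) :
    ∀ w : W, Set.BijOn (coverMap H hc r v0 a₀ b₀) (T.neighborSet w)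
      (H.neighborSet (coverMap H hc r v0 a₀ b₀ w)) := by
  set π := coverMap H hc r v0 a₀ b₀ with hπ
  have hadjpar := coverMap_adj_parent hT hTlf hTreg hHlf hHreg hc r v0 ha₀ hb₀
  intro w
  by_cases hw : w = r
  · subst hw
    have hspec := pickBij_spec (hTlf w) (hHlf v0) (by rw [hTreg, hHreg]) ha₀ hb₀
    have heq : ∀ u ∈ T.neighborSet w, π u =
        pickBij (T.neighborSet w) (H.neighborSet v0) a₀ b₀ u := by
      intro u hu
      rw [SimpleGraph.mem_neighborSet] at hu
      have hune : u ≠ w := hu.ne'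
      have hpar : tparent hc w u = w := by
        have hne2 : u ≠ tparent hT.isConnected w w := by
          rw [tparent_self]; exact hune
        exact (tparent_of_adj hT hu hne2).2
      exact coverMap_child1 hune hpar
    have : π w = v0 := coverMap_root
    rw [this]
    exact Set.BijOn.congr hspec.1 fun u hu => (heq u hu).symm
  · have hamem : tparent hc r w ∈ T.neighborSet w := by
      rw [SimpleGraph.mem_neighborSet]
      exact (tparent_adj hc hw).symm
    have hbmem : π (tparent hc r w) ∈ H.neighborSet (π w) := by
      rw [SimpleGraph.mem_neighborSet]
      exact (hadjpar w hw).symm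
    have hspec := pickBij_spec (hTlf w) (hHlf (π w)) (by rw [hTreg, hHreg]) hamem hbmem
    have heq : ∀ u ∈ T.neighborSet w, π u =
        pickBij (T.neighborSet w) (H.neighborSet (π w)) (tparent hc r w) (π (tparent hc r w))
          u := by
      intro u hu
      rw [SimpleGraph.mem_neighborSet] at hu
      by_cases hup : u = tparent hc r w
      · rw [hup, hspec.2]
      · have h2 := tparent_of_adj hT hu hup
        have hune : u ≠ r := by
          intro h
          subst h
          rw [SimpleGraph.dist_self] at h2
          omega
        have hpu : tparent hc r u ≠ r := by
          rw [h2.2]; exact hw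
        rw [hπ, coverMap_child2 hune hpu]
        rw [h2.2]
      
    exact Set.BijOn.congr hspec.1 fun u hu => (heq u hu).symm




lemma lift_exists {π : W → V}
    (hlift : ∀ (x : W) (u : V), H.Adj (π x) u → ∃! y : W, T.Adj x y ∧ π y = u) :
    ∀ {u v : V} (ω : H.Walk u v) (x : W), π x = u →
      ∃ (y : W) (q : T.Walk x y), q.length = ω.length ∧
        ∀ i, π (q.getVert i) = ω.getVert i := by
  intro u v ω
  induction ω with
  | nil =>
    intro x hx
    exact ⟨x, Walk.nil, by simp, fun i => by simpa [Walk.getVert] using hx⟩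
  | @cons u u₁ v h ω ih =>
    intro x hx
    have hadj : H.Adj (π x) u₁ := by rw [hx]; exact h
    obtain ⟨y₁, ⟨hty, hpy⟩, -⟩ := hlift x u₁ hadj
    obtain ⟨y, q, hql, hqv⟩ := ih y₁ hpy
    refine ⟨y, Walk.cons hty q, by simp [hql], fun i => ?_⟩
    cases i with
    | zero => simpa [Walk.getVert] using hx
    | succ j => simpa [Walk.getVert_cons_succ] using hqv j

lemma lift_unique {π : W → V}
    (hlift : ∀ (x : W) (u : V), H.Adj (π x) u → ∃! y : W, T.Adj x y ∧ π y = u)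
    {u v : V} (ω : H.Walk u v) {x y z : W}
    (q1 : T.Walk x y) (q2 : T.Walk x z)
    (hl1 : q1.length = ω.length) (hl2 : q2.length = ω.length)
    (hv1 : ∀ i, π (q1.getVert i) = ω.getVert i)
    (hv2 : ∀ i, π (q2.getVert i) = ω.getVert i) :
    y = z := by
  have key : ∀ i, i ≤ ω.length → q1.getVert i = q2.getVert i := by
    intro i
    induction i with
    | zero => intro _; rw [Walk.getVert_zero, Walk.getVert_zero]
    | succ j ihj =>
      intro hj
      have hje := ihj (by omega)
      have hadj : H.Adj (ω.getVert j) (ω.getVert (j + 1)) := ω.adj_getVert_succ (by omega)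
      have h1 : T.Adj (q1.getVert j) (q1.getVert (j + 1)) := q1.adj_getVert_succ (by omega)
      have h2 : T.Adj (q2.getVert j) (q2.getVert (j + 1)) := q2.adj_getVert_succ (by omega)
      have hadj' : H.Adj (π (q1.getVert j)) (ω.getVert (j + 1)) := by
        rw [hv1 j]; exact hadj
      obtain ⟨yy, -, huniq⟩ := hlift (q1.getVert j) (ω.getVert (j + 1)) hadj'
      have e1 : q1.getVert (j + 1) = yy := huniq _ ⟨h1, hv1 (j + 1)⟩
      have e2 : q2.getVert (j + 1) = yy := by
        refine huniq _ ⟨?_, hv2 (j + 1)⟩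
        rw [hje]; exact h2
      rw [e1, e2]
  have h1 : q1.getVert q1.length = y := Walk.getVert_length q1
  have h2 : q2.getVert q2.length = z := Walk.getVert_length q2
  rw [hl1] at h1
  rw [hl2] at h2
  rw [← h1, ← h2]
  exact key ω.length le_rfl

lemma lift_endpoint {π : W → V} {a b : W} (q : T.Walk a b) {u v : V} (ω : H.Walk u v)
    (hl : q.length = ω.length) (hv : ∀ i, π (q.getVert i) = ω.getVert i) : π b = v := by
  have h1 : q.getVert q.length = b := Walk.getVert_length q
  have h2 : ω.getVert ω.length = v := Walk.getVert_length ω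
  have := hv ω.length
  rw [h2, ← hl, h1] at this
  exact this


end CoverAux

section Main
open SimpleGraph CoverAux

/-- If `H` is a quasi-transitive `d`-regular locally finite, connected,
infinite simple graph with a cycle and `T` is the `d`-regular tree, then there is a
strong covering map `π : V(T) → V(H)` with uniformly non-trivial fibres. -/
theorem exists_strongCoveringMap_from_regular_tree {W V : Type*}
    (T : SimpleGraph W) (H : SimpleGraph V) (d : ℕ)
    (hTtree : T.IsTree) (hTinf : Infinite W)
    (hTlf : ∀ v : W, (T.neighborSet v).Finite)
    (hTreg : ∀ v : W, (T.neighborSet v).ncard = d)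
    (hHconn : H.Connected) (hHinf : Infinite V)
    (hHlf : ∀ v : V, (H.neighborSet v).Finite)
    (hHreg : ∀ v : V, (H.neighborSet v).ncard = d)
    (hqt : QuasiTransitive H) (hcyc : ¬ H.IsAcyclic) :
    ∃ π : W → V, IsStrongCoveringMap T H π ∧ HasUniformlyNontrivialFibres T π := by
  classical
  have hc : T.Connected := hTtree.isConnected
  -- a cycle in H
  unfold SimpleGraph.IsAcyclic at hcyc
  push_neg at hcyc
  obtain ⟨v1, c0, hc0⟩ := hcyc
  obtain ⟨S, hS⟩ := hqt
  set L := c0.length with hL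
  -- graph isomorphisms preserve distances
  have hisod : ∀ (φ : H ≃g H) (a b : V), H.dist (φ a) (φ b) ≤ H.dist a b := by
    intro φ a b
    obtain ⟨q, hq⟩ := hHconn.exists_walk_length_eq_dist a b
    have h1 : H.dist (φ a) (φ b) ≤ (q.map φ.toHom).length := SimpleGraph.dist_le _
    rwa [Walk.length_map, hq] at h1
  have hisodist : ∀ (φ : H ≃g H) (a b : V), H.dist (φ a) (φ b) = H.dist a b := by
    intro φ a b
    refine le_antisymm (hisod φ a b) ?_
    have := hisod φ.symm (φ a) (φ b)
    simpa using this
  set M := S.sup fun s => H.dist s v1 with hM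
  -- every vertex of H is within distance M of a cycle of length L
  have hnear : ∀ v : V, ∃ v', H.dist v v' ≤ M ∧
      ∃ c : H.Walk v' v', c.IsCycle ∧ c.length = L := by
    intro v
    obtain ⟨φ, hφ⟩ := hS v
    refine ⟨φ.symm v1, ?_, ?_⟩
    · have h1 : H.dist v (φ.symm v1) = H.dist (φ v) v1 := by
        have := hisodist φ v (φ.symm v1)
        rw [φ.apply_symm_apply] at this
        exact this.symm
      rw [h1]
      exact Finset.le_sup (f := fun s => H.dist s v1) hφ
    · refine ⟨c0.map φ.symm.toHom, ?_, ?_⟩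
      · exact (Walk.map_isCycle_iff_of_injective φ.symm.toEquiv.injective).mpr hc0
      · rw [hL, Walk.length_map]
  -- base points
  obtain ⟨r⟩ : Nonempty W := inferInstance
  obtain ⟨v0⟩ : Nonempty V := inferInstance
  have hNr : ∃ a, a ∈ T.neighborSet r := by
    obtain ⟨w, hw⟩ := exists_ne r
    have hd := dist_ne_zero_of_ne hc hw
    obtain ⟨q, hq⟩ := hc.exists_walk_length_eq_dist r w
    refine ⟨q.getVert 1, ?_⟩
    rw [SimpleGraph.mem_neighborSet]
    have := q.adj_getVert_succ (by omega : 0 < q.length)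
    rwa [Walk.getVert_zero] at this
  have hNv0 : ∃ b, b ∈ H.neighborSet v0 := by
    obtain ⟨w, hw⟩ := exists_ne v0
    have hd : H.dist v0 w ≠ 0 := by
      have := hHconn.pos_dist_of_ne (Ne.symm hw)
      omega
    obtain ⟨q, hq⟩ := hHconn.exists_walk_length_eq_dist v0 w
    refine ⟨q.getVert 1, ?_⟩
    rw [SimpleGraph.mem_neighborSet]
    have := q.adj_getVert_succ (by omega : 0 < q.length)
    rwa [Walk.getVert_zero] at this
  obtain ⟨a₀, ha₀⟩ := hNr
  obtain ⟨b₀, hb₀⟩ := hNv0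
  set π := coverMap H hc r v0 a₀ b₀ with hπ
  have hbij : ∀ w : W, Set.BijOn π (T.neighborSet w) (H.neighborSet (π w)) :=
    coverMap_bijOn hTtree hTlf hTreg hHlf hHreg hc r v0 ha₀ hb₀
  have hhom : ∀ {a b : W}, T.Adj a b → H.Adj (π a) (π b) := by
    intro a b hab
    have := (hbij a).mapsTo (by rwa [SimpleGraph.mem_neighborSet])
    rwa [SimpleGraph.mem_neighborSet] at this
  have hlip : ∀ x y : W, H.dist (π x) (π y) ≤ T.dist x y := by
    intro x y
    obtain ⟨q, hq⟩ := hc.exists_walk_length_eq_dist x y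
    have h1 : H.dist (π x) (π y) ≤ (q.map ⟨π, fun h => hhom h⟩).length :=
      SimpleGraph.dist_le _
    rwa [Walk.length_map, hq] at h1
  have hlift : ∀ (x : W) (u : V), H.Adj (π x) u → ∃! y : W, T.Adj x y ∧ π y = u := by
    intro x u hadj
    have hmem : u ∈ H.neighborSet (π x) := by rwa [SimpleGraph.mem_neighborSet]
    obtain ⟨y, hy, hyeq⟩ := (hbij x).surjOn hmem
    refine ⟨y, ⟨by rwa [← SimpleGraph.mem_neighborSet], hyeq⟩, ?_⟩
    rintro z ⟨hz1, hz2⟩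
    exact (hbij x).injOn (by rwa [SimpleGraph.mem_neighborSet]) hy (by rw [hz2, hyeq])
  refine ⟨π, ⟨hlip, hlift⟩, 2 * M + L, ?_⟩
  intro x
  obtain ⟨v', hdv', c, hcyc', hclen⟩ := hnear (π x)
  obtain ⟨p, hp⟩ := hHconn.exists_walk_length_eq_dist (π x) v'
  obtain ⟨x₁, q1, hq1l, hq1v⟩ := lift_exists hlift p x rfl
  have hπx₁ : π x₁ = v' := lift_endpoint q1 p hq1l hq1v
  obtain ⟨x₂, q2, hq2l, hq2v⟩ := lift_exists hlift c x₁ hπx₁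
  have hπx₂ : π x₂ = v' := lift_endpoint q2 c hq2l hq2v
  have hnb : ∀ i, i + 2 ≤ q2.length → q2.getVert i ≠ q2.getVert (i + 2) := by
    intro i hi heq
    refine cycle_getVert_ne hcyc' i (by omega) ?_
    rw [← hq2v i, ← hq2v (i + 2), heq]
  have hdist12 : T.dist x₁ x₂ = q2.length := by
    have := tree_geodesic hTtree q2 hnb q2.length le_rfl
    rwa [Walk.getVert_length] at this
  have h3L : 3 ≤ L := by rw [hL]; exact hc0.three_le_length
  have hne12 : x₁ ≠ x₂ := by
    intro h
    have hz : T.dist x₁ x₂ = 0 := by rw [h]; exact SimpleGraph.dist_self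
    omega
  obtain ⟨y, q3, hq3l, hq3v⟩ := lift_exists hlift p.reverse x₂ hπx₂
  have hπy : π y = π x := lift_endpoint q3 p.reverse hq3l hq3v
  have hq3len : q3.length = p.length := by rw [hq3l, Walk.length_reverse]
  have hxy : x ≠ y := by
    intro h
    subst h
    have hrv : ∀ i, π (q3.reverse.getVert i) = p.getVert i := by
      intro i
      rw [Walk.getVert_reverse]
      by_cases hi : i ≤ q3.length
      · rw [hq3v (q3.length - i), Walk.getVert_reverse]
        congr 1
        omega
      · rw [show q3.length - i = 0 by omega, Walk.getVert_zero]
        rw [Walk.getVert_of_length_le p (by omega)]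
        exact hπx₂
    have hrl : q3.reverse.length = p.length := by rw [Walk.length_reverse, hq3l, Walk.length_reverse]
    exact hne12 (lift_unique hlift p q1 q3.reverse hq1l hrl hq1v hrv)
  have hb1 : T.dist x x₁ ≤ M := by
    have h1 := SimpleGraph.dist_le q1
    rw [hq1l, hp] at h1
    omega
  have hb2 : T.dist x₁ x₂ ≤ L := by rw [hdist12, hq2l, hclen]
  have hb3 : T.dist x₂ y ≤ M := by
    have h1 := SimpleGraph.dist_le q3
    rw [hq3len, hp] at h1
    have h2 : H.dist (π x) v' ≤ M := hdv'
    omega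
  have htri : T.dist x y ≤ T.dist x x₁ + T.dist x₁ x₂ + T.dist x₂ y := by
    calc T.dist x y ≤ T.dist x x₂ + T.dist x₂ y := hc.dist_triangle
      _ ≤ T.dist x x₁ + T.dist x₁ x₂ + T.dist x₂ y := by
          have := hc.dist_triangle (u := x) (v := x₁) (w := x₂)
          omega
  refine ⟨y, hπy.symm, hc.pos_dist_of_ne hxy, by omega⟩


end Main
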